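/- arXiv:2203.03052 — 2 statements merged into one kernel-verified Lean document; each statement's English description precedes it below -/
import Mathlib

section
/- Let ã₁, ã₂ ∈ ℚ with 0 < ã₁ < 1 and 0 < ã₂ − ã₁ + 1/2 < 1, let b̃₁, b̃₂ ∈ ℝ, let N be a positive integer and τ ∈ ℍ. Set z₁ = ã₁Nτ + b̃₁ and z₂ = ã₂Nτ + b̃₂, and assume z₂ ∉ ℤ + Nτℤ. Put a = (a₁, a₂) := (ã₁, ã₂ − ã₁ + 1/2), b = (b₁, b₂) := (b̃₁, b̃₂ − b̃₁ + 1/2), and let B and Q be the bilinear and quadratic forms attached to the matrix A = [[1,1],[1,0]], so Q(n+a) = (n₁+a₁)²/2 + (n₁+a₁)(n₂+a₂) and B(n,b) = (n₁+n₂)b₁ + n₁b₂. Then μ(z₁, z₂; Nτ) = ( e^{πi z₁} / θ(z₂; Nτ) ) · q^{−N(a₁²/2 + a₁a₂)} · [ Σ_{n∈ℤ², n₁≥0, n₂≥0} e^{2πi B(n,b)} q^{N·Q(n+a)} − Σ_{n∈ℤ², n₁<0, n₂<0} e^{2πi B(n,b)} q^{N·Q(n+a)} ], where both series on the right converge absolutely.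 (This is the paper's Corollary expressing the Appell–Lerch sum μ through the cone vertex algebra trace function T^{(N)}_{a,b}(τ) = η(τ)^{−2}·[bracket] for the rank-2 lattice with Gram matrix N·[[1,1],[1,0]].) -/
/-!
For `n ≥ 0` the ratio `Rₙ = e^{2πiz₁}(q^N)ⁿ` in the `n`-th Lerch term `Dₙ/(1 - Rₙ)` has modulus
`< 1`, and for `n < 0` modulus `> 1`; expanding `1/(1 - Rₙ)` as a geometric series in `Rₙ`
resp. `Rₙ⁻¹` turns the Lerch sum into `Σ_{n,k ≥ 0} Dₙ Rₙᵏ - Σ_{n,k < 0} Dₙ Rₙᵏ`. Up to the constant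
`q^{N·Q(a)}`, `Dₙ Rₙᵏ` is exactly the lattice term of `(n, k)`. Both quadrant series converge
absolutely since `Q(n + a)` grows linearly on the positive quadrant when `a₁, a₂ > 0`, and, as
`Q(-x) = Q(x)`, on the negative quadrant when `a₁, a₂ < 1`.
-/

open Complex Real

/-- `qp τ c` is `q^c = e^{2πicτ}`. -/
noncomputable def qp (τ : ℂ) (c : ℝ) : ℂ := Complex.exp (2 * Real.pi * Complex.I * c * τ)

/-- `ph x = e^{2πix}` for real `x`. -/
noncomputable def ph (x : ℝ) : ℂ := Complex.exp (2 * Real.pi * Complex.I * x)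

/-- The Jacobi theta function `θ(z;τ) = Σ_{n∈ℤ+1/2} e^{πin²τ + 2πin(z+1/2)}`. -/
noncomputable def jtheta (z τ : ℂ) : ℂ :=
  ∑' n : ℤ, Complex.exp (Real.pi * Complex.I * ((n : ℂ) + 1 / 2) ^ 2 * τ +
    2 * Real.pi * Complex.I * ((n : ℂ) + 1 / 2) * (z + 1 / 2))

/-- The Appell–Lerch sum
`μ(z₁,z₂;τ) = (e^{πiz₁}/θ(z₂;τ)) Σ_{n∈ℤ} (-1)ⁿ e^{2πinz₂} q^{n(n+1)/2}/(1 - e^{2πiz₁}qⁿ)`. -/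
noncomputable def lerchMu (z₁ z₂ τ : ℂ) : ℂ :=
  (Complex.exp (Real.pi * Complex.I * z₁) / jtheta z₂ τ) *
    ∑' n : ℤ, ((-1 : ℂ) ^ n * Complex.exp (2 * Real.pi * Complex.I * (n : ℂ) * z₂) *
        Complex.exp (Real.pi * Complex.I * (n : ℂ) * ((n : ℂ) + 1) * τ)) /
      (1 - Complex.exp (2 * Real.pi * Complex.I * z₁) *
        Complex.exp (2 * Real.pi * Complex.I * (n : ℂ) * τ))

section Quadrants

variable {α β γ : Type*} [AddCommMonoid α] [TopologicalSpace α]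

theorem Function.Injective.hasSum_ite_iff {g : β → γ} (hg : g.Injective) {p : γ → Prop}
    [DecidablePred p] (hp : ∀ x, p x ↔ x ∈ Set.range g) {f : γ → α} {a : α} :
    HasSum (fun x => if p x then f x else 0) a ↔ HasSum (f ∘ g) a := by
  rw [← hg.hasSum_iff fun x hx => if_neg ((hp x).not.2 hx)]
  simp only [Function.comp_def, (hp _).2 (Set.mem_range_self _), if_true]

theorem hasSum_ite_nonneg_iff {f : ℤ → α} {a : α} :
    HasSum (fun n => if 0 ≤ n then f n else 0) a ↔ HasSum (fun m : ℕ => f m) a :=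
  Nat.cast_injective.hasSum_ite_iff fun n =>
    ⟨fun h => ⟨n.toNat, Int.toNat_of_nonneg h⟩, by rintro ⟨m, rfl⟩; exact m.cast_nonneg⟩

theorem hasSum_ite_neg_iff {f : ℤ → α} {a : α} :
    HasSum (fun n => if n < 0 then f n else 0) a ↔ HasSum (fun m : ℕ => f (-(m + 1))) a :=
  Function.Injective.hasSum_ite_iff (g := fun m : ℕ => -((m : ℤ) + 1))
    (fun m m' h => by simpa using h) fun n =>
    ⟨fun h => ⟨(-n - 1).toNat, by dsimp only; omega⟩, by rintro ⟨m, rfl⟩; dsimp only; omega⟩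

theorem summable_ite_nonneg_quadrant_iff {f : ℤ × ℤ → α} :
    Summable (fun n : ℤ × ℤ => if 0 ≤ n.1 ∧ 0 ≤ n.2 then f n else 0) ↔
      Summable (fun m : ℕ × ℕ => f (m.1, m.2)) :=
  exists_congr fun _ => Function.Injective.hasSum_ite_iff
    (g := fun m : ℕ × ℕ => ((m.1 : ℤ), (m.2 : ℤ))) (fun m m' h => by simpa [Prod.ext_iff] using h)
    fun n =>
    ⟨fun h => ⟨(n.1.toNat, n.2.toNat), by ext <;> simp [h.1, h.2]⟩,
      by rintro ⟨m, rfl⟩; exact ⟨m.1.cast_nonneg, m.2.cast_nonneg⟩⟩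

theorem summable_ite_neg_quadrant_iff {f : ℤ × ℤ → α} :
    Summable (fun n : ℤ × ℤ => if n.1 < 0 ∧ n.2 < 0 then f n else 0) ↔
      Summable (fun m : ℕ × ℕ => f (-(m.1 + 1), -(m.2 + 1))) :=
  exists_congr fun _ => Function.Injective.hasSum_ite_iff
    (g := fun m : ℕ × ℕ => (-((m.1 : ℤ) + 1), -((m.2 : ℤ) + 1)))
    (fun m m' h => by simp only [Prod.mk.injEq] at h; ext <;> omega) fun n =>
    ⟨fun h => ⟨((-n.1 - 1).toNat, (-n.2 - 1).toNat), by ext <;> simp <;> omega⟩,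
      by rintro ⟨m, rfl⟩; dsimp only; omega⟩

end Quadrants

section Geometric

variable {K : Type*} [NormedField K] {x : K}

theorem hasSum_ite_nonneg_zpow (hx : ‖x‖ < 1) :
    HasSum (fun k : ℤ => if 0 ≤ k then x ^ k else 0) (1 - x)⁻¹ :=
  hasSum_ite_nonneg_iff.2 (by simpa using hasSum_geometric_of_norm_lt_one hx)

theorem hasSum_ite_neg_zpow (hx : 1 < ‖x‖) :
    HasSum (fun k : ℤ => if k < 0 then x ^ k else 0) (-(1 - x)⁻¹) := by
  have hx₀ : x ≠ 0 := norm_pos_iff.1 (one_pos.trans hx)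
  have hinv : ‖x⁻¹‖ < 1 := by rw [norm_inv]; exact inv_lt_one_of_one_lt₀ hx
  have hterm : (fun m : ℕ => x ^ (-((m : ℤ) + 1))) = fun m => x⁻¹ * x⁻¹ ^ m := by
    ext m
    rw [zpow_neg, ← inv_zpow, zpow_add_one₀ (inv_ne_zero hx₀), zpow_natCast, mul_comm]
  refine hasSum_ite_neg_iff.2 ?_
  rw [hterm]
  have hsum : x⁻¹ * (1 - x⁻¹)⁻¹ = -(1 - x)⁻¹ := by
    rw [← mul_inv, mul_one_sub, mul_inv_cancel₀ hx₀, ← neg_sub, inv_neg]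
  simpa only [hsum] using (hasSum_geometric_of_norm_lt_one hinv).mul_left x⁻¹

theorem hasSum_div_one_sub_of_quadrants {G : ℤ × ℤ → K} {D R : ℤ → K}
    (hG : ∀ n k, G (n, k) = D n * R n ^ k) (hR_pos : ∀ n, 0 ≤ n → ‖R n‖ < 1)
    (hR_neg : ∀ n < 0, 1 < ‖R n‖)
    (hpos : Summable fun p : ℤ × ℤ => if 0 ≤ p.1 ∧ 0 ≤ p.2 then G p else 0)
    (hneg : Summable fun p : ℤ × ℤ => if p.1 < 0 ∧ p.2 < 0 then G p else 0) :
    HasSum (fun n => D n / (1 - R n))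
      ((∑' p : ℤ × ℤ, if 0 ≤ p.1 ∧ 0 ≤ p.2 then G p else 0) -
        ∑' p : ℤ × ℤ, if p.1 < 0 ∧ p.2 < 0 then G p else 0) := by
  refine (hpos.hasSum.sub hneg.hasSum).prod_fiberwise fun n => ?_
  simp only [hG]
  rcases le_or_gt 0 n with hn | hn
  · have hrow := (hasSum_ite_nonneg_zpow (hR_pos n hn)).mul_left (D n)
    simpa [hn, not_lt.2 hn, mul_ite, div_eq_mul_inv] using hrow
  · have hrow := ((hasSum_ite_neg_zpow (hR_neg n hn)).mul_left (D n)).neg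
    simpa [hn, not_le.2 hn, mul_ite, div_eq_mul_inv] using hrow

end Geometric

theorem norm_ph (x : ℝ) : ‖ph x‖ = 1 := by
  rw [ph, Complex.norm_exp]
  simp

theorem norm_qp (τ : ℂ) (c : ℝ) : ‖qp τ c‖ = Real.exp (-(2 * π * c * τ.im)) := by
  rw [qp, Complex.norm_exp]
  simp

/-- `Q(x) = xᵀAx/2` for `A = [[1,1],[1,0]]`. -/
noncomputable def coneQ (x₁ x₂ : ℝ) : ℝ := x₁ ^ 2 / 2 + x₁ * x₂

theorem coneQ_neg (x₁ x₂ : ℝ) : coneQ (-x₁) (-x₂) = coneQ x₁ x₂ := by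
  simp only [coneQ]
  ring

theorem min_mul_add_le_coneQ {a₁ a₂ x₁ x₂ : ℝ} (ha₁ : 0 ≤ a₁) (ha₂ : 0 ≤ a₂) (hx₁ : 0 ≤ x₁)
    (hx₂ : 0 ≤ x₂) : min a₁ a₂ * (x₁ + x₂) ≤ coneQ (x₁ + a₁) (x₂ + a₂) := by
  have h₁ : min a₁ a₂ * x₁ ≤ a₂ * x₁ := mul_le_mul_of_nonneg_right (min_le_right _ _) hx₁
  have h₂ : min a₁ a₂ * x₂ ≤ a₁ * x₂ := mul_le_mul_of_nonneg_right (min_le_left _ _) hx₂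
  simp only [coneQ]
  nlinarith [sq_nonneg (x₁ + a₁), mul_nonneg hx₁ hx₂, mul_nonneg ha₁ ha₂]

theorem summable_exp_neg_mul_coneQ {t a₁ a₂ : ℝ} (ht : 0 < t) (ha₁ : 0 < a₁) (ha₂ : 0 < a₂) :
    Summable fun m : ℕ × ℕ => Real.exp (-t * coneQ (m.1 + a₁) (m.2 + a₂)) := by
  set r := Real.exp (-t * min a₁ a₂)
  have hr₀ : 0 ≤ r := (Real.exp_pos _).le
  have hr₁ : r < 1 := Real.exp_lt_one_iff.2 (by nlinarith [lt_min ha₁ ha₂])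
  refine Summable.of_nonneg_of_le (fun _ => (Real.exp_pos _).le) (fun m => ?_)
    ((summable_geometric_of_lt_one hr₀ hr₁).mul_of_nonneg (summable_geometric_of_lt_one hr₀ hr₁)
      (fun k => pow_nonneg hr₀ k) (fun k => pow_nonneg hr₀ k))
  have hQ := min_mul_add_le_coneQ ha₁.le ha₂.le m.1.cast_nonneg m.2.cast_nonneg
  rw [← Real.exp_nat_mul, ← Real.exp_nat_mul, ← Real.exp_add, Real.exp_le_exp]
  nlinarith

/-- The lattice term `e^{2πiB(n,b)} q^{N·Q(n+a)}`, where `B(n,b) = (n₁+n₂)b₁ + n₁b₂`. -/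
noncomputable def coneTerm (τ : ℂ) (N : ℕ) (a₁ a₂ b₁ b₂ : ℝ) (n : ℤ × ℤ) : ℂ :=
  ph (((n.1 : ℝ) + (n.2 : ℝ)) * b₁ + (n.1 : ℝ) * b₂) *
    qp τ ((N : ℝ) * coneQ ((n.1 : ℝ) + a₁) ((n.2 : ℝ) + a₂))

section ConeTerm

variable {τ : ℂ} {N : ℕ} {a₁ a₂ b₁ b₂ : ℝ}

theorem norm_coneTerm (n : ℤ × ℤ) :
    ‖coneTerm τ N a₁ a₂ b₁ b₂ n‖ =
      Real.exp (-(2 * π * N * τ.im) * coneQ (n.1 + a₁) (n.2 + a₂)) := by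
  rw [coneTerm, norm_mul, norm_ph, norm_qp, one_mul]
  ring_nf

theorem summable_norm_coneTerm_nonneg (hN : 0 < N) (hτ : 0 < τ.im) (ha₁ : 0 < a₁)
    (ha₂ : 0 < a₂) :
    Summable fun n : ℤ × ℤ => if 0 ≤ n.1 ∧ 0 ≤ n.2 then ‖coneTerm τ N a₁ a₂ b₁ b₂ n‖ else 0 := by
  have ht : 0 < 2 * π * N * τ.im := by positivity
  rw [summable_ite_nonneg_quadrant_iff]
  simpa [norm_coneTerm] using summable_exp_neg_mul_coneQ ht ha₁ ha₂

theorem summable_norm_coneTerm_neg (hN : 0 < N) (hτ : 0 < τ.im) (ha₁ : a₁ < 1)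
    (ha₂ : a₂ < 1) :
    Summable fun n : ℤ × ℤ => if n.1 < 0 ∧ n.2 < 0 then ‖coneTerm τ N a₁ a₂ b₁ b₂ n‖ else 0 := by
  have ht : 0 < 2 * π * N * τ.im := by positivity
  have hreflect (m : ℕ) (a : ℝ) : ((-((m : ℤ) + 1) : ℤ) : ℝ) + a = -(m + (1 - a)) := by
    push_cast
    ring
  rw [summable_ite_neg_quadrant_iff]
  simpa only [norm_coneTerm, hreflect, coneQ_neg] using
    summable_exp_neg_mul_coneQ ht (sub_pos.2 ha₁) (sub_pos.2 ha₂)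

end ConeTerm

theorem qp_neg_mul_qp (τ : ℂ) (c : ℝ) : qp τ (-c) * qp τ c = 1 := by
  rw [qp, qp, ← Complex.exp_add, ← Complex.exp_zero]
  congr 1
  push_cast
  ring

noncomputable def lerchNumerator (z₂ w : ℂ) (n : ℤ) : ℂ :=
  (-1 : ℂ) ^ n * Complex.exp (2 * π * Complex.I * n * z₂) *
    Complex.exp (π * Complex.I * n * (n + 1) * w)

noncomputable def lerchRatio (z₁ w : ℂ) (n : ℤ) : ℂ :=
  Complex.exp (2 * π * Complex.I * z₁) * Complex.exp (2 * π * Complex.I * n * w)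

theorem lerchMu_eq_tsum (z₁ z₂ w : ℂ) :
    lerchMu z₁ z₂ w = Complex.exp (π * Complex.I * z₁) / jtheta z₂ w *
      ∑' n : ℤ, lerchNumerator z₂ w n / (1 - lerchRatio z₁ w n) :=
  rfl

section LerchRatio

variable {z₁ w : ℂ} {n : ℤ}

theorem norm_lerchRatio : ‖lerchRatio z₁ w n‖ = Real.exp (-(2 * π * (z₁.im + n * w.im))) := by
  rw [lerchRatio, ← Complex.exp_add, Complex.norm_exp]
  simp [mul_add, mul_assoc, add_comm]

theorem norm_lerchRatio_lt_one (hz : 0 < z₁.im) (hw : 0 < w.im) (hn : 0 ≤ n) :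
    ‖lerchRatio z₁ w n‖ < 1 := by
  have hn' : (0 : ℝ) ≤ n := by exact_mod_cast hn
  have : 0 < z₁.im + n * w.im := by positivity
  rw [norm_lerchRatio, Real.exp_lt_one_iff, neg_lt_zero]
  positivity

theorem one_lt_norm_lerchRatio (hz : z₁.im < w.im) (hw : 0 ≤ w.im) (hn : n < 0) :
    1 < ‖lerchRatio z₁ w n‖ := by
  have hn' : (n : ℝ) ≤ -1 := by exact_mod_cast Int.le_sub_one_of_lt hn
  have : z₁.im + n * w.im < 0 := by nlinarith
  rw [norm_lerchRatio, Real.one_lt_exp_iff, neg_pos]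
  exact mul_neg_of_pos_of_neg (by positivity) this

end LerchRatio

theorem coneTerm_eq_qp_mul_lerch {τ z₁ z₂ : ℂ} {N : ℕ} {α₁ α₂ β₁ β₂ : ℝ}
    (hz₁ : z₁ = α₁ * N * τ + β₁) (hz₂ : z₂ = α₂ * N * τ + β₂) (n k : ℤ) :
    coneTerm τ N α₁ (α₂ - α₁ + 1 / 2) β₁ (β₂ - β₁ + 1 / 2) (n, k) =
      qp τ (N * coneQ α₁ (α₂ - α₁ + 1 / 2)) * lerchNumerator z₂ (N * τ) n *
        lerchRatio z₁ (N * τ) n ^ k := by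
  simp only [coneTerm, coneQ, lerchNumerator, lerchRatio, ph, qp]
  rw [show (-1 : ℂ) ^ n = Complex.exp (n * (π * Complex.I)) by
    rw [Complex.exp_int_mul, Complex.exp_pi_mul_I]]
  simp only [← Complex.exp_add, ← Complex.exp_int_mul]
  congr 1
  rw [hz₁, hz₂]
  push_cast
  ring

theorem appell_lerch_eq_cone_trace_general
    (ta1 ta2 : ℚ) (h1 : 0 < ta1) (h2 : ta1 < 1)
    (h3 : 0 < ta2 - ta1 + 1 / 2) (h4 : ta2 - ta1 + 1 / 2 < 1)
    (tb1 tb2 : ℝ) (N : ℕ) (hN : 0 < N) (τ : ℂ) (hτ : 0 < τ.im)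
    (z₁ z₂ : ℂ)
    (hz₁ : z₁ = (ta1 : ℂ) * N * τ + tb1)
    (hz₂ : z₂ = (ta2 : ℂ) * N * τ + tb2)
    (a₁ a₂ : ℝ) (ha₁ : a₁ = (ta1 : ℝ)) (ha₂ : a₂ = ((ta2 : ℝ) - (ta1 : ℝ) + 1 / 2))
    (b₁ b₂ : ℝ) (hb₁ : b₁ = tb1) (hb₂ : b₂ = tb2 - tb1 + 1 / 2) :
    Summable (fun n : ℤ × ℤ => if 0 ≤ n.1 ∧ 0 ≤ n.2 then
      ‖ph (((n.1 : ℝ) + (n.2 : ℝ)) * b₁ + (n.1 : ℝ) * b₂) *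
        qp τ ((N : ℝ) * (((n.1 : ℝ) + a₁) ^ 2 / 2 + ((n.1 : ℝ) + a₁) * ((n.2 : ℝ) + a₂)))‖
      else 0) ∧
    Summable (fun n : ℤ × ℤ => if n.1 < 0 ∧ n.2 < 0 then
      ‖ph (((n.1 : ℝ) + (n.2 : ℝ)) * b₁ + (n.1 : ℝ) * b₂) *
        qp τ ((N : ℝ) * (((n.1 : ℝ) + a₁) ^ 2 / 2 + ((n.1 : ℝ) + a₁) * ((n.2 : ℝ) + a₂)))‖
      else 0) ∧
    lerchMu z₁ z₂ ((N : ℂ) * τ) =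
      (Complex.exp (Real.pi * Complex.I * z₁) / jtheta z₂ ((N : ℂ) * τ)) *
        qp τ (-((N : ℝ) * (a₁ ^ 2 / 2 + a₁ * a₂))) *
        ((∑' n : ℤ × ℤ, if 0 ≤ n.1 ∧ 0 ≤ n.2 then
            ph (((n.1 : ℝ) + (n.2 : ℝ)) * b₁ + (n.1 : ℝ) * b₂) *
              qp τ ((N : ℝ) * (((n.1 : ℝ) + a₁) ^ 2 / 2 + ((n.1 : ℝ) + a₁) * ((n.2 : ℝ) + a₂)))
            else 0) -
         (∑' n : ℤ × ℤ, if n.1 < 0 ∧ n.2 < 0 then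
            ph (((n.1 : ℝ) + (n.2 : ℝ)) * b₁ + (n.1 : ℝ) * b₂) *
              qp τ ((N : ℝ) * (((n.1 : ℝ) + a₁) ^ 2 / 2 + ((n.1 : ℝ) + a₁) * ((n.2 : ℝ) + a₂)))
            else 0)) := by
  subst a₁ a₂ b₁ b₂
  have hα₁ : (0 : ℝ) < ta1 := by exact_mod_cast h1
  have hα₁' : (ta1 : ℝ) < 1 := by exact_mod_cast h2
  have hα₂ : 0 < (ta2 : ℝ) - ta1 + 1 / 2 := by simpa using (Rat.cast_pos (K := ℝ)).2 h3
  have hα₂' : (ta2 : ℝ) - ta1 + 1 / 2 < 1 := by simpa using (Rat.cast_lt (K := ℝ)).2 h4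
  have hpos := summable_norm_coneTerm_nonneg (b₁ := tb1) (b₂ := tb2 - tb1 + 1 / 2) hN hτ hα₁ hα₂
  have hneg := summable_norm_coneTerm_neg (b₁ := tb1) (b₂ := tb2 - tb1 + 1 / 2) hN hτ hα₁' hα₂'
  refine ⟨hpos, hneg, ?_⟩
  have hw : 0 < ((N : ℂ) * τ).im := by simpa using mul_pos (Nat.cast_pos.2 hN) hτ
  have hz₁im : z₁.im = ta1 * ((N : ℂ) * τ).im := by simp [hz₁, mul_assoc]
  have hz₁r : z₁ = ((ta1 : ℝ) : ℂ) * N * τ + tb1 := by rw [hz₁, Complex.ofReal_ratCast]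
  have hz₂r : z₂ = ((ta2 : ℝ) : ℂ) * N * τ + tb2 := by rw [hz₂, Complex.ofReal_ratCast]
  have hcone := coneTerm_eq_qp_mul_lerch hz₁r hz₂r
  have hsum := (hasSum_div_one_sub_of_quadrants hcone
    (fun n hn => norm_lerchRatio_lt_one (by rw [hz₁im]; positivity) hw hn)
    (fun n hn => one_lt_norm_lerchRatio (by rw [hz₁im]; nlinarith) hw.le hn)
    (hpos.of_norm_bounded fun p => by split_ifs <;> simp)
    (hneg.of_norm_bounded fun p => by split_ifs <;> simp)).mul_left
      (qp τ (-(N * coneQ ta1 (ta2 - ta1 + 1 / 2))))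
  simp only [mul_div_assoc, ← mul_assoc, qp_neg_mul_qp, one_mul] at hsum
  rw [lerchMu_eq_tsum, hsum.tsum_eq, ← mul_assoc]
  rfl

/-- The Appell–Lerch sum `μ(ã₁Nτ+b̃₁, ã₂Nτ+b̃₂; Nτ)` expressed through the cone vertex
algebra trace function `T^{(N)}_{a,b}` for the rank-2 lattice with Gram matrix
`N·[[1,1],[1,0]]`, where `a = (ã₁, ã₂-ã₁+1/2)`, `b = (b̃₁, b̃₂-b̃₁+1/2)`,
`Q(n+a) = (n₁+a₁)²/2 + (n₁+a₁)(n₂+a₂)` and `B(n,b) = (n₁+n₂)b₁ + n₁b₂`. -/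
theorem appell_lerch_eq_cone_trace
    (ta1 ta2 : ℚ) (h1 : 0 < ta1) (h2 : ta1 < 1)
    (h3 : 0 < ta2 - ta1 + 1 / 2) (h4 : ta2 - ta1 + 1 / 2 < 1)
    (tb1 tb2 : ℝ) (N : ℕ) (hN : 0 < N) (τ : ℂ) (hτ : 0 < τ.im)
    (z₁ z₂ : ℂ)
    (hz₁ : z₁ = (ta1 : ℂ) * N * τ + tb1)
    (hz₂ : z₂ = (ta2 : ℂ) * N * τ + tb2)
    (hz₂' : ∀ c d : ℤ, z₂ ≠ (c : ℂ) + (d : ℂ) * ((N : ℂ) * τ))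
    (a₁ a₂ : ℝ) (ha₁ : a₁ = (ta1 : ℝ)) (ha₂ : a₂ = ((ta2 : ℝ) - (ta1 : ℝ) + 1 / 2))
    (b₁ b₂ : ℝ) (hb₁ : b₁ = tb1) (hb₂ : b₂ = tb2 - tb1 + 1 / 2) :
    Summable (fun n : ℤ × ℤ => if 0 ≤ n.1 ∧ 0 ≤ n.2 then
      ‖ph (((n.1 : ℝ) + (n.2 : ℝ)) * b₁ + (n.1 : ℝ) * b₂) *
        qp τ ((N : ℝ) * (((n.1 : ℝ) + a₁) ^ 2 / 2 + ((n.1 : ℝ) + a₁) * ((n.2 : ℝ) + a₂)))‖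
      else 0) ∧
    Summable (fun n : ℤ × ℤ => if n.1 < 0 ∧ n.2 < 0 then
      ‖ph (((n.1 : ℝ) + (n.2 : ℝ)) * b₁ + (n.1 : ℝ) * b₂) *
        qp τ ((N : ℝ) * (((n.1 : ℝ) + a₁) ^ 2 / 2 + ((n.1 : ℝ) + a₁) * ((n.2 : ℝ) + a₂)))‖
      else 0) ∧
    lerchMu z₁ z₂ ((N : ℂ) * τ) =
      (Complex.exp (Real.pi * Complex.I * z₁) / jtheta z₂ ((N : ℂ) * τ)) *
        qp τ (-((N : ℝ) * (a₁ ^ 2 / 2 + a₁ * a₂))) *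
        ((∑' n : ℤ × ℤ, if 0 ≤ n.1 ∧ 0 ≤ n.2 then
            ph (((n.1 : ℝ) + (n.2 : ℝ)) * b₁ + (n.1 : ℝ) * b₂) *
              qp τ ((N : ℝ) * (((n.1 : ℝ) + a₁) ^ 2 / 2 + ((n.1 : ℝ) + a₁) * ((n.2 : ℝ) + a₂)))
            else 0) -
         (∑' n : ℤ × ℤ, if n.1 < 0 ∧ n.2 < 0 then
            ph (((n.1 : ℝ) + (n.2 : ℝ)) * b₁ + (n.1 : ℝ) * b₂) *
              qp τ ((N : ℝ) * (((n.1 : ℝ) + a₁) ^ 2 / 2 + ((n.1 : ℝ) + a₁) * ((n.2 : ℝ) + a₂)))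
            else 0)) :=
  appell_lerch_eq_cone_trace_general ta1 ta2 h1 h2 h3 h4 tb1 tb2 N hN τ hτ z₁ z₂ hz₁ hz₂ a₁ a₂ ha₁
    ha₂ b₁ b₂ hb₁ hb₂
end

section
/- Let m be a positive integer, τ ∈ ℍ, and z ∈ ℂ with 0 < Im z < Im τ; set α := Im(z)/Im(τ) and y := e^{2πiz}. Then Σ_{k∈ℤ} y^{2km} q^{mk²} / (1 − y q^k) = (1/2) Σ_{(k,l)∈ℤ²} ( sgn(k+α) + sgn(l) ) y^{2mk+l} q^{mk² + kl} + (1/2) Σ_{k∈ℤ} y^{2mk} q^{mk²}, where all series converge absolutely. -/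
/-!
Put `w_k = y q^k`. Since `0 < Im z < Im τ`, `|w_k| < 1` for `k ≥ 0` and `|w_k| > 1` for `k < 0`,
with a margin `ρ < 1` independent of `k`, and `sgn (k + α)` is `1` resp. `-1` accordingly.
In both cases `Σ_l (sgn (k + α) + sgn l) w_k^l` is a one-sided geometric series, supported on
`l ≥ 0` resp. `l ≤ 0`, with sum `2 / (1 - w_k) - 1`. Multiplying by the theta coefficient
`y^{2mk} q^{mk²}` and summing over `k` gives the identity; the terms of the double series are
bounded by `2 ρ^{|l|}` times those of the absolutely convergent theta series
`Σ_k y^{2mk} q^{mk²}`, which justifies summing the double series fibrewise.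
-/

open Complex Real

lemma hasSum_one_add_sign_mul_zpow {w : ℂ} (hw : ‖w‖ < 1) :
    HasSum (fun l : ℤ => ((1 + Real.sign (l : ℝ) : ℝ) : ℂ) * w ^ l) (2 / (1 - w) - 1) := by
  have hnat : HasSum (fun n : ℕ => ((1 + Real.sign ((n : ℤ) : ℝ) : ℝ) : ℂ) * w ^ (n : ℤ))
      (2 * (1 - w)⁻¹ - 1) := by
    refine (((hasSum_geometric_of_norm_lt_one hw).mul_left 2).sub
      (hasSum_ite_eq 0 (1 : ℂ))).congr_fun fun n => ?_
    rw [zpow_natCast]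
    rcases n with _ | n
    · norm_num
    · rw [Real.sign_of_pos (by positivity)]
      norm_num
  have hneg : HasSum (fun n : ℕ =>
      ((1 + Real.sign ((-(n + 1 : ℤ) : ℤ) : ℝ) : ℝ) : ℂ) * w ^ (-(n + 1 : ℤ))) 0 := by
    refine hasSum_zero.congr_fun fun n => ?_
    rw [Real.sign_of_neg (by push_cast; linarith [n.cast_nonneg (α := ℝ)])]
    simp
  rw [div_eq_mul_inv, ← add_zero (2 * (1 - w)⁻¹ - 1)]
  exact HasSum.of_nat_of_neg_add_one
    (f := fun l : ℤ => ((1 + Real.sign (l : ℝ) : ℝ) : ℂ) * w ^ l) hnat hneg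

lemma neg_one_add_sign_mul_zpow (w : ℂ) (l : ℤ) :
    ((-1 + Real.sign (l : ℝ) : ℝ) : ℂ) * w ^ l =
      -(((1 + Real.sign ((-l : ℤ) : ℝ) : ℝ) : ℂ) * w⁻¹ ^ (-l)) := by
  rw [Int.cast_neg, Real.sign_neg, inv_zpow', neg_neg]
  push_cast
  ring

lemma hasSum_neg_one_add_sign_mul_zpow {w : ℂ} (hw : 1 < ‖w‖) :
    HasSum (fun l : ℤ => ((-1 + Real.sign (l : ℝ) : ℝ) : ℂ) * w ^ l) (2 / (1 - w) - 1) := by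
  have hw0 : w ≠ 0 := norm_pos_iff.mp (one_pos.trans hw)
  have hw1 : 1 - w ≠ 0 := fun h => by simp [← eq_of_sub_eq_zero h] at hw
  have hinv : ‖w⁻¹‖ < 1 := by rw [norm_inv]; exact inv_lt_one_of_one_lt₀ hw
  have hsum := ((Equiv.neg ℤ).hasSum_iff.mpr (hasSum_one_add_sign_mul_zpow hinv)).neg
  simp only [Function.comp_def, Equiv.neg_apply, ← neg_one_add_sign_mul_zpow] at hsum
  have hw1' : w - 1 ≠ 0 := sub_ne_zero.mpr fun h => hw1 (by rw [h, sub_self])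
  have hval : -(2 / (1 - w⁻¹) - 1) = 2 / (1 - w) - 1 := by
    field_simp
    ring
  rw [← hval]
  exact hsum

lemma norm_one_add_sign_mul_zpow_le {w : ℂ} {ρ : ℝ} (hw : ‖w‖ ≤ ρ) (l : ℤ) :
    ‖((1 + Real.sign (l : ℝ) : ℝ) : ℂ) * w ^ l‖ ≤ 2 * ρ ^ l.natAbs := by
  have hρ : 0 ≤ ρ := (norm_nonneg w).trans hw
  rcases lt_or_ge l 0 with hl | hl
  · rw [Real.sign_of_neg (Int.cast_lt_zero.mpr hl), add_neg_cancel, ofReal_zero, zero_mul,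
      norm_zero]
    positivity
  · lift l to ℕ using hl
    have hs : |1 + Real.sign (l : ℝ)| ≤ 2 := by
      rcases l.eq_zero_or_pos with rfl | hl
      · norm_num
      · rw [Real.sign_of_pos (by exact_mod_cast hl)]; norm_num
    rw [norm_mul, Complex.norm_real, Real.norm_eq_abs, zpow_natCast, norm_pow, Int.natAbs_natCast]
    exact mul_le_mul hs (pow_le_pow_left₀ (norm_nonneg w) hw l) (by positivity) zero_le_two

lemma norm_neg_one_add_sign_mul_zpow_le {w : ℂ} {ρ : ℝ} (hw : ‖w⁻¹‖ ≤ ρ) (l : ℤ) :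
    ‖((-1 + Real.sign (l : ℝ) : ℝ) : ℂ) * w ^ l‖ ≤ 2 * ρ ^ l.natAbs := by
  rw [neg_one_add_sign_mul_zpow, norm_neg, ← Int.natAbs_neg]
  exact norm_one_add_sign_mul_zpow_le hw (-l)

def SeparatedFromUnitCircle (ρ s : ℝ) (w : ℂ) : Prop :=
  (s = 1 ∧ ‖w‖ ≤ ρ) ∨ (s = -1 ∧ ρ⁻¹ ≤ ‖w‖)

namespace SeparatedFromUnitCircle

variable {ρ s : ℝ} {w : ℂ}

lemma hasSum (h : SeparatedFromUnitCircle ρ s w) (hρ0 : 0 < ρ) (hρ1 : ρ < 1) :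
    HasSum (fun l : ℤ => ((s + Real.sign (l : ℝ) : ℝ) : ℂ) * w ^ l) (2 / (1 - w) - 1) := by
  rcases h with ⟨rfl, hw⟩ | ⟨rfl, hw⟩
  · exact hasSum_one_add_sign_mul_zpow (hw.trans_lt hρ1)
  · exact hasSum_neg_one_add_sign_mul_zpow ((one_lt_inv₀ hρ0).mpr hρ1 |>.trans_le hw)

lemma norm_le (h : SeparatedFromUnitCircle ρ s w) (hρ0 : 0 < ρ) (l : ℤ) :
    ‖((s + Real.sign (l : ℝ) : ℝ) : ℂ) * w ^ l‖ ≤ 2 * ρ ^ l.natAbs := by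
  rcases h with ⟨rfl, hw⟩ | ⟨rfl, hw⟩
  · exact norm_one_add_sign_mul_zpow_le hw l
  · exact norm_neg_one_add_sign_mul_zpow_le (by rw [norm_inv]; exact inv_le_of_inv_le₀ hρ0 hw) l

lemma one_sub_le_norm_one_sub (h : SeparatedFromUnitCircle ρ s w) (hρ0 : 0 < ρ) :
    1 - ρ ≤ ‖1 - w‖ := by
  rcases h with ⟨-, hw⟩ | ⟨-, hw⟩
  · linarith [norm_sub_norm_le 1 w, norm_one (α := ℂ)]
  · have hρ : 2 ≤ ρ + ρ⁻¹ := by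
      nlinarith [mul_nonneg (inv_pos.mpr hρ0).le (sq_nonneg (ρ - 1)), mul_inv_cancel₀ hρ0.ne']
    linarith [norm_sub_norm_le w 1, norm_one (α := ℂ), norm_sub_rev w 1]

end SeparatedFromUnitCircle

lemma summable_pow_natAbs {ρ : ℝ} (hρ0 : 0 ≤ ρ) (hρ1 : ρ < 1) :
    Summable fun l : ℤ => ρ ^ l.natAbs := by
  have := summable_geometric_of_lt_one hρ0 hρ1
  exact .of_nat_of_neg (by simpa using this) (by simpa using this)

section SignedGeometricSeries

variable {ι : Type*} {c w : ι → ℂ} {s : ι → ℝ} {ρ : ℝ}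

lemma summable_norm_div_one_sub (hρ0 : 0 < ρ) (hρ1 : ρ < 1) (hc : Summable fun k => ‖c k‖)
    (hw : ∀ k, SeparatedFromUnitCircle ρ (s k) (w k)) :
    Summable fun k => ‖c k / (1 - w k)‖ := by
  refine (hc.div_const (1 - ρ)).of_nonneg_of_le (fun _ => norm_nonneg _) fun k => ?_
  rw [norm_div]
  exact div_le_div_of_nonneg_left (norm_nonneg _) (sub_pos.2 hρ1)
    ((hw k).one_sub_le_norm_one_sub hρ0)

lemma summable_norm_sign_add_sign_mul (hρ0 : 0 < ρ) (hρ1 : ρ < 1) (hc : Summable fun k => ‖c k‖)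
    (hw : ∀ k, SeparatedFromUnitCircle ρ (s k) (w k)) :
    Summable fun n : ι × ℤ =>
      ‖((s n.1 + Real.sign (n.2 : ℝ) : ℝ) : ℂ) * (c n.1 * w n.1 ^ n.2)‖ := by
  refine (hc.mul_of_nonneg ((summable_pow_natAbs hρ0.le hρ1).mul_left 2)
    (fun _ => norm_nonneg _) fun _ => by positivity).of_nonneg_of_le
    (fun _ => norm_nonneg _) fun ⟨k, l⟩ => ?_
  rw [mul_left_comm, norm_mul]
  exact mul_le_mul_of_nonneg_left ((hw k).norm_le hρ0 l) (norm_nonneg _)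

lemma hasSum_sign_add_sign_mul (hρ0 : 0 < ρ) (hρ1 : ρ < 1)
    (hw : ∀ k, SeparatedFromUnitCircle ρ (s k) (w k)) (k : ι) :
    HasSum (fun l : ℤ => ((s k + Real.sign (l : ℝ) : ℝ) : ℂ) * (c k * w k ^ l))
      (2 * (c k / (1 - w k)) - c k) := by
  simp only [mul_left_comm _ (c k)]
  rw [show 2 * (c k / (1 - w k)) - c k = c k * (2 / (1 - w k) - 1) by ring]
  exact ((hw k).hasSum hρ0 hρ1).mul_left (c k)

lemma tsum_div_one_sub_eq (hρ0 : 0 < ρ) (hρ1 : ρ < 1) (hc : Summable fun k => ‖c k‖)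
    (hw : ∀ k, SeparatedFromUnitCircle ρ (s k) (w k)) :
    ∑' k, c k / (1 - w k) =
      1 / 2 * ∑' n : ι × ℤ, ((s n.1 + Real.sign (n.2 : ℝ) : ℝ) : ℂ) * (c n.1 * w n.1 ^ n.2) +
        1 / 2 * ∑' k, c k := by
  have hfib := hasSum_sign_add_sign_mul (c := c) hρ0 hρ1 hw
  rw [(summable_norm_sign_add_sign_mul hρ0 hρ1 hc hw).of_norm.tsum_prod' fun k => (hfib k).summable,
    tsum_congr fun k => (hfib k).tsum_eq,
    ((summable_norm_div_one_sub hρ0 hρ1 hc hw).of_norm.mul_left 2).tsum_sub hc.of_norm,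
    tsum_mul_left]
  ring

end SignedGeometricSeries

lemma qp_add (τ : ℂ) (a b : ℝ) : qp τ (a + b) = qp τ a * qp τ b := by
  rw [qp, qp, qp, ← Complex.exp_add]; push_cast; ring_nf

lemma qp_zpow (τ : ℂ) (c : ℝ) (l : ℤ) : qp τ c ^ l = qp τ (l * c) := by
  rw [qp, qp, ← Complex.exp_int_mul]; push_cast; ring_nf

lemma norm_exp_mul_qp (τ z : ℂ) (c : ℝ) :
    ‖cexp (2 * π * I * z) * qp τ c‖ = rexp (-(2 * π * (z.im + c * τ.im))) := by
  rw [qp, ← Complex.exp_add, Complex.norm_exp]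
  congr 1
  simp only [add_re, mul_re, re_ofNat, ofReal_re, im_ofNat, ofReal_im, mul_zero, sub_zero, I_re,
    mul_im, zero_mul, add_zero, I_im, mul_one, sub_self, zero_sub, zero_add]
  ring

lemma exp_zpow_mul_qp_eq_jacobiTheta₂_term (m : ℕ) (k : ℤ) (τ z : ℂ) :
    cexp (2 * π * I * z) ^ (2 * (m : ℤ) * k) * qp τ ((m : ℝ) * (k : ℝ) ^ 2) =
      jacobiTheta₂_term k (2 * m * z) (2 * m * τ) := by
  rw [qp, ← Complex.exp_int_mul, ← Complex.exp_add, jacobiTheta₂_term]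
  push_cast
  ring_nf

lemma zpow_add_mul_qp_eq {y : ℂ} (hy : y ≠ 0) (τ : ℂ) (m : ℕ) (k l : ℤ) :
    y ^ (2 * (m : ℤ) * k + l) * qp τ ((m : ℝ) * (k : ℝ) ^ 2 + (k : ℝ) * (l : ℝ)) =
      y ^ (2 * (m : ℤ) * k) * qp τ ((m : ℝ) * (k : ℝ) ^ 2) * (y * qp τ k) ^ l := by
  rw [zpow_add₀ hy, qp_add, mul_zpow, qp_zpow, mul_comm (k : ℝ)]
  ring

lemma separatedFromUnitCircle_exp_mul_qp {τ z : ℂ} (hz0 : 0 < z.im) (hz1 : z.im < τ.im)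
    (k : ℤ) :
    SeparatedFromUnitCircle (rexp (-(2 * π * min z.im (τ.im - z.im))))
      (Real.sign (k + z.im / τ.im)) (cexp (2 * π * I * z) * qp τ k) := by
  have hτ : 0 < τ.im := hz0.trans hz1
  rw [SeparatedFromUnitCircle, norm_exp_mul_qp, ← Real.exp_neg, Real.exp_le_exp,
    Real.exp_le_exp]
  rcases le_or_gt 0 k with hk | hk
  · have hk' : (0 : ℝ) ≤ k := by exact_mod_cast hk
    refine .inl ⟨Real.sign_of_pos (by positivity), ?_⟩
    nlinarith [min_le_left z.im (τ.im - z.im), Real.pi_pos, mul_nonneg hk' hτ.le]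
  · have hk' : (k : ℝ) ≤ -1 := by exact_mod_cast Int.le_sub_one_of_lt hk
    refine .inr ⟨Real.sign_of_neg ?_, ?_⟩
    · linarith [(div_lt_one hτ).mpr hz1]
    · nlinarith [min_le_right z.im (τ.im - z.im), Real.pi_pos,
        mul_le_mul_of_nonneg_right hk' hτ.le]

theorem f1_signed_expansion_general (m : ℕ) (hm : 0 < m) (τ z : ℂ)
    (hz0 : 0 < z.im) (hz1 : z.im < τ.im)
    (y : ℂ) (hy : y = Complex.exp (2 * Real.pi * Complex.I * z)) :
    Summable (fun k : ℤ =>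
      ‖y ^ (2 * k * (m : ℤ)) * qp τ ((m : ℝ) * (k : ℝ) ^ 2) / (1 - y * qp τ (k : ℝ))‖) ∧
    Summable (fun n : ℤ × ℤ =>
      ‖((Real.sign ((n.1 : ℝ) + z.im / τ.im) + Real.sign (n.2 : ℝ) : ℝ) : ℂ) *
        (y ^ (2 * (m : ℤ) * n.1 + n.2) *
          qp τ ((m : ℝ) * (n.1 : ℝ) ^ 2 + (n.1 : ℝ) * (n.2 : ℝ)))‖) ∧
    Summable (fun k : ℤ => ‖y ^ (2 * (m : ℤ) * k) * qp τ ((m : ℝ) * (k : ℝ) ^ 2)‖) ∧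
    (∑' k : ℤ, y ^ (2 * k * (m : ℤ)) * qp τ ((m : ℝ) * (k : ℝ) ^ 2) / (1 - y * qp τ (k : ℝ))) =
      (1 / 2) * (∑' n : ℤ × ℤ,
        ((Real.sign ((n.1 : ℝ) + z.im / τ.im) + Real.sign (n.2 : ℝ) : ℝ) : ℂ) *
          (y ^ (2 * (m : ℤ) * n.1 + n.2) *
            qp τ ((m : ℝ) * (n.1 : ℝ) ^ 2 + (n.1 : ℝ) * (n.2 : ℝ)))) +
      (1 / 2) * (∑' k : ℤ, y ^ (2 * (m : ℤ) * k) * qp τ ((m : ℝ) * (k : ℝ) ^ 2)) := by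
  subst hy
  have hρ0 : 0 < rexp (-(2 * π * min z.im (τ.im - z.im))) := Real.exp_pos _
  have hρ1 : rexp (-(2 * π * min z.im (τ.im - z.im))) < 1 := by
    have : 0 < min z.im (τ.im - z.im) := lt_min hz0 (sub_pos.mpr hz1)
    rw [Real.exp_lt_one_iff, neg_lt_zero]
    positivity
  have hc : Summable fun k : ℤ =>
      ‖cexp (2 * π * I * z) ^ (2 * (m : ℤ) * k) * qp τ ((m : ℝ) * (k : ℝ) ^ 2)‖ := by
    simp_rw [exp_zpow_mul_qp_eq_jacobiTheta₂_term]
    refine summable_norm_iff.mpr ((summable_jacobiTheta₂_term_iff _ _).mpr ?_)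
    have : 0 < τ.im := hz0.trans hz1
    simp [hm, this]
  have hw := separatedFromUnitCircle_exp_mul_qp hz0 hz1
  simp_rw [mul_right_comm (2 : ℤ) _ (m : ℤ),
    zpow_add_mul_qp_eq (Complex.exp_ne_zero _)]
  have hsum := summable_norm_sign_add_sign_mul hρ0 hρ1 hc hw
  have htsum := tsum_div_one_sub_eq hρ0 hρ1 hc hw
  exact ⟨summable_norm_div_one_sub hρ0 hρ1 hc hw, hsum, hc, htsum⟩

/-- For `0 < Im z < Im τ` and `α = Im z / Im τ`,
`Σ_{k∈ℤ} y^{2km} q^{mk²}/(1 - y q^k)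
  = (1/2) Σ_{(k,l)∈ℤ²} (sgn(k+α)+sgn(l)) y^{2mk+l} q^{mk²+kl} + (1/2) Σ_{k∈ℤ} y^{2mk} q^{mk²}`. -/
theorem f1_signed_expansion (m : ℕ) (hm : 0 < m) (τ z : ℂ) (hτ : 0 < τ.im)
    (hz0 : 0 < z.im) (hz1 : z.im < τ.im)
    (y : ℂ) (hy : y = Complex.exp (2 * Real.pi * Complex.I * z)) :
    Summable (fun k : ℤ =>
      ‖y ^ (2 * k * (m : ℤ)) * qp τ ((m : ℝ) * (k : ℝ) ^ 2) / (1 - y * qp τ (k : ℝ))‖) ∧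
    Summable (fun n : ℤ × ℤ =>
      ‖((Real.sign ((n.1 : ℝ) + z.im / τ.im) + Real.sign (n.2 : ℝ) : ℝ) : ℂ) *
        (y ^ (2 * (m : ℤ) * n.1 + n.2) *
          qp τ ((m : ℝ) * (n.1 : ℝ) ^ 2 + (n.1 : ℝ) * (n.2 : ℝ)))‖) ∧
    Summable (fun k : ℤ => ‖y ^ (2 * (m : ℤ) * k) * qp τ ((m : ℝ) * (k : ℝ) ^ 2)‖) ∧
    (∑' k : ℤ, y ^ (2 * k * (m : ℤ)) * qp τ ((m : ℝ) * (k : ℝ) ^ 2) / (1 - y * qp τ (k : ℝ))) =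
      (1 / 2) * (∑' n : ℤ × ℤ,
        ((Real.sign ((n.1 : ℝ) + z.im / τ.im) + Real.sign (n.2 : ℝ) : ℝ) : ℂ) *
          (y ^ (2 * (m : ℤ) * n.1 + n.2) *
            qp τ ((m : ℝ) * (n.1 : ℝ) ^ 2 + (n.1 : ℝ) * (n.2 : ℝ)))) +
      (1 / 2) * (∑' k : ℤ, y ^ (2 * (m : ℤ) * k) * qp τ ((m : ℝ) * (k : ℝ) ^ 2)) :=
  f1_signed_expansion_general m hm τ z hz0 hz1 y hy
end
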